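/- arXiv:1410.3639 — 2 statements merged into one kernel-verified Lean document; each statement's English description precedes it below -/
import Mathlib

section
/- In the finite setting (H finite-dimensional, Θ and U finite sets, w : Θ × U → ℝ≥0), there exists a least favorable prior, i.e., a probability distribution π* on Θ achieving max_π min_M Σ_θ R_M(θ) π(θ), where the min is over all POVMs with outcome set U; moreover, every minimax POVM is a Bayes POVM with respect to π*. -/
open Matrix
open scoped ComplexOrder

variable {n : ℕ} {Θ U : Type*}

/-- A POVM with finite outcome set `U`. -/
def IsPOVM [Fintype U] (M : U → Matrix (Fin n) (Fin n) ℂ) : Prop :=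
  (∀ u, (M u).PosSemidef) ∧ ∑ u, M u = 1

/-- The risk of the POVM `M` at parameter `θ`. -/
noncomputable def risk [Fintype U] (w : Θ → U → ℝ)
    (ρ : Θ → Matrix (Fin n) (Fin n) ℂ) (M : U → Matrix (Fin n) (Fin n) ℂ) (θ : Θ) : ℝ :=
  ∑ u, w θ u * ((ρ θ * M u).trace).re

/-- The Bayes risk of the POVM `M` with respect to the prior `π`. -/
noncomputable def bayesRisk [Fintype Θ] [Fintype U] (w : Θ → U → ℝ)
    (ρ : Θ → Matrix (Fin n) (Fin n) ℂ) (M : U → Matrix (Fin n) (Fin n) ℂ) (π : Θ → ℝ) : ℝ :=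
  ∑ θ, risk w ρ M θ * π θ

/-!
Let `v = inf_M max_θ R_M(θ)`. Every Bayes value `inf_M Σ_θ R_M(θ) π(θ)` is at most `v`, since a
mean is at most a maximum. Conversely, the risk vectors of POVMs form a convex subset of `ℝ^Θ`
(POVMs form a convex set and `M ↦ R_M` is linear) that misses the open orthant
`{r | ∀ θ, r θ < v}`. A hyperplane separating the two has a nonnegative normal; normalized, it is
a prior whose Bayes value is at least `v`, hence exactly `v`, so it is least favorable. A minimax
`M` then has Bayes risk at most `max_θ R_M(θ) = v`, which is the Bayes value of that prior.
-/

open scoped MatrixOrder in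
theorem Matrix.PosSemidef.trace_mul_nonneg {m 𝕜 : Type*} [Fintype m] [DecidableEq m] [RCLike 𝕜]
    {A B : Matrix m m 𝕜} (hA : A.PosSemidef) (hB : B.PosSemidef) : 0 ≤ (A * B).trace := by
  obtain ⟨X, rfl⟩ := CStarAlgebra.nonneg_iff_eq_star_mul_self.mp hA.nonneg
  rw [star_eq_conjTranspose, mul_assoc, trace_mul_comm]
  exact (hB.mul_mul_conjTranspose_same X).trace_nonneg

theorem sum_mul_le_ciSup_of_mem_stdSimplex {ι : Type*} [Fintype ι] {π : ι → ℝ}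
    (hπ : π ∈ stdSimplex ℝ ι) (x : ι → ℝ) : ∑ i, x i * π i ≤ ⨆ i, x i :=
  calc ∑ i, x i * π i ≤ ∑ i, (⨆ j, x j) * π i :=
        Finset.sum_le_sum fun i _ =>
          mul_le_mul_of_nonneg_right (le_ciSup (Set.finite_range x).bddAbove i) (hπ.1 i)
    _ = ⨆ j, x j := by rw [← Finset.mul_sum, hπ.2, mul_one]

/-- The orthant is closed under decreasing a coordinate, so a functional bounded above on it
cannot have a negative coefficient. -/
theorem apply_single_nonneg_of_forall_lt {ι : Type*} [DecidableEq ι] (f : (ι → ℝ) →ₗ[ℝ] ℝ)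
    {u v : ℝ} (hf : ∀ x : ι → ℝ, (∀ i, x i < v) → f x < u) (i : ι) : 0 ≤ f (Pi.single i 1) := by
  by_contra! hi
  set a : ι → ℝ := fun _ => v - 1
  set s := (u - f a) / -f (Pi.single i 1)
  have hs : s * -f (Pi.single i 1) = u - f a := div_mul_cancel₀ _ (by linarith)
  have hs_nonneg : 0 ≤ s := div_nonneg (by linarith [hf a fun _ => by simp [a]]) (by linarith)
  refine (hf (a - s • Pi.single i 1) fun j => ?_).ne ?_
  · have : 0 ≤ s * (Pi.single i 1 : ι → ℝ) j :=
      mul_nonneg hs_nonneg (by by_cases h : j = i <;> simp [h])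
    simp only [Pi.sub_apply, Pi.smul_apply, smul_eq_mul, a]
    linarith
  · rw [map_sub, map_smul, smul_eq_mul]
    linarith

theorem exists_mem_stdSimplex_le_sum_mul {ι : Type*} [Fintype ι] {S : Set (ι → ℝ)}
    (hS : Convex ℝ S) (hSne : S.Nonempty) {v : ℝ} (hv : ∀ r ∈ S, ∃ i, v ≤ r i) :
    ∃ π ∈ stdSimplex ℝ ι, ∀ r ∈ S, v ≤ ∑ i, r i * π i := by
  classical
  set O : Set (ι → ℝ) := Set.univ.pi fun _ => Set.Iio v
  have hO : ∀ x : ι → ℝ, (∀ i, x i < v) → x ∈ O := fun x hx i _ => hx i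
  have hdisj : Disjoint O S := Set.disjoint_left.2 fun r hrO hrS => by
    obtain ⟨i, hi⟩ := hv r hrS
    exact (hrO i (Set.mem_univ i)).not_ge hi
  obtain ⟨f, u, hfO, hfS⟩ := geometric_hahn_banach_open (convex_pi fun _ _ => convex_Iio v)
    (isOpen_set_pi Set.finite_univ fun _ _ => isOpen_Iio) hS hdisj
  set c : ι → ℝ := fun i => f (Pi.single i 1)
  have hf : ∀ x, f x = ∑ i, x i * c i := fun x => by
    rw [← f.coe_coe, LinearMap.pi_apply_eq_sum_univ]
    refine Finset.sum_congr rfl fun i _ => ?_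
    have : (Pi.single i 1 : ι → ℝ) = fun j => if i = j then 1 else 0 :=
      funext fun j => by simp [Pi.single_apply, eq_comm]
    simp only [smul_eq_mul, c, this]
    rfl
  have hc_nonneg (i : ι) : 0 ≤ c i :=
    apply_single_nonneg_of_forall_lt (f : (ι → ℝ) →ₗ[ℝ] ℝ) (fun x hx => hfO x (hO x hx)) i
  have hc_sum_pos : 0 < ∑ i, c i := by
    refine (Finset.sum_nonneg fun i _ => hc_nonneg i).lt_of_ne fun h => ?_
    have hc : ∀ i, c i = 0 := fun i =>
      (Finset.sum_eq_zero_iff_of_nonneg fun i _ => hc_nonneg i).1 h.symm i (Finset.mem_univ i)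
    obtain ⟨b, hb⟩ := hSne
    have := hfO (fun _ => v - 1) (hO _ fun _ => by linarith)
    have := hfS b hb
    simp only [hf, hc, mul_zero, Finset.sum_const_zero] at *
    linarith
  have hvu : v * ∑ i, c i ≤ u := by
    refine le_of_forall_pos_lt_add fun ε hε => ?_
    have := hfO (fun _ => v - ε / ∑ i, c i) (hO _ fun _ => by linarith [div_pos hε hc_sum_pos])
    rw [hf, ← Finset.mul_sum, sub_mul, div_mul_cancel₀ _ hc_sum_pos.ne'] at this
    linarith
  refine ⟨fun i => c i / ∑ j, c j, ⟨fun i => div_nonneg (hc_nonneg i) hc_sum_pos.le, ?_⟩,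
    fun r hr => ?_⟩
  · rw [← Finset.sum_div, div_self hc_sum_pos.ne']
  · simp only [mul_div_assoc', ← Finset.sum_div]
    rw [le_div_iff₀ hc_sum_pos, ← hf]
    exact hvu.trans (hfS r hr)

section
variable [Fintype U]

theorem isPOVM_pi_single [DecidableEq U] (u : U) :
    IsPOVM (Pi.single u (1 : Matrix (Fin n) (Fin n) ℂ)) := by
  refine ⟨fun u' => ?_, Fintype.sum_pi_single' u 1⟩
  by_cases h : u' = u
  · subst h; simpa using PosSemidef.one
  · simpa [h] using PosSemidef.zero

theorem convex_setOf_isPOVM : Convex ℝ {M : U → Matrix (Fin n) (Fin n) ℂ | IsPOVM M} := by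
  rintro M ⟨hM, hM_sum⟩ M' ⟨hM', hM'_sum⟩ a b ha hb hab
  refine ⟨fun u => ((hM u).smul ha).add ((hM' u).smul hb), ?_⟩
  simp only [Pi.add_apply, Pi.smul_apply, Finset.sum_add_distrib, ← Finset.smul_sum, hM_sum,
    hM'_sum, ← add_smul, hab, one_smul]

theorem isLinearMap_risk (w : Θ → U → ℝ) (ρ : Θ → Matrix (Fin n) (Fin n) ℂ) :
    IsLinearMap ℝ (risk w ρ) where
  map_add M M' := funext fun θ => by
    simp only [risk, Pi.add_apply, trace_add, Complex.add_re, mul_add,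
      Finset.sum_add_distrib]
  map_smul a M := funext fun θ => by
    simp only [risk, Pi.smul_apply, Matrix.mul_smul, trace_smul, Complex.smul_re, smul_eq_mul,
      Finset.mul_sum]
    exact Finset.sum_congr rfl fun u _ => by ring

theorem risk_nonneg {w : Θ → U → ℝ} {ρ : Θ → Matrix (Fin n) (Fin n) ℂ}
    {M : U → Matrix (Fin n) (Fin n) ℂ} {θ : Θ} (hρ : (ρ θ).PosSemidef) (hw : ∀ u, 0 ≤ w θ u)
    (hM : ∀ u, (M u).PosSemidef) : 0 ≤ risk w ρ M θ :=
  Finset.sum_nonneg fun u _ =>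
    mul_nonneg (hw u) (Complex.nonneg_iff.1 (hρ.trace_mul_nonneg (hM u))).1

end

/-- in the finite setting there exists a least favorable prior, and
every minimax POVM is Bayes with respect to it. -/
theorem exists_least_favorable_prior_finite
    [Fintype Θ] [Nonempty Θ] [Fintype U] [Nonempty U]
    (ρ : Θ → Matrix (Fin n) (Fin n) ℂ)
    (hρ : ∀ θ, (ρ θ).PosSemidef ∧ (ρ θ).trace = 1)
    (w : Θ → U → ℝ) (hw : ∀ θ u, 0 ≤ w θ u) :
    ∃ πLF ∈ stdSimplex ℝ Θ,
      (∀ π ∈ stdSimplex ℝ Θ,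
        (⨅ M : {M : U → Matrix (Fin n) (Fin n) ℂ // IsPOVM M}, bayesRisk w ρ M.1 π) ≤
          (⨅ M : {M : U → Matrix (Fin n) (Fin n) ℂ // IsPOVM M}, bayesRisk w ρ M.1 πLF)) ∧
      (∀ M : U → Matrix (Fin n) (Fin n) ℂ, IsPOVM M →
        (∀ M' : U → Matrix (Fin n) (Fin n) ℂ, IsPOVM M' →
            (⨆ θ, risk w ρ M θ) ≤ ⨆ θ, risk w ρ M' θ) →
        (∀ M' : U → Matrix (Fin n) (Fin n) ℂ, IsPOVM M' →
            bayesRisk w ρ M πLF ≤ bayesRisk w ρ M' πLF)) := by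
  classical
  set P := {M : U → Matrix (Fin n) (Fin n) ℂ // IsPOVM M}
  have : Nonempty P := ⟨⟨_, isPOVM_pi_single (Classical.arbitrary U)⟩⟩
  have hrisk (M : P) (θ : Θ) : 0 ≤ risk w ρ M.1 θ := risk_nonneg (hρ θ).1 (hw θ) M.2.1
  have hbayes_bdd (π : Θ → ℝ) (hπ : π ∈ stdSimplex ℝ Θ) :
      BddBelow (Set.range fun M : P => bayesRisk w ρ M.1 π) :=
    ⟨0, by rintro _ ⟨M, rfl⟩; exact Finset.sum_nonneg fun θ _ => mul_nonneg (hrisk M θ) (hπ.1 θ)⟩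
  set v := ⨅ M : P, ⨆ θ, risk w ρ M.1 θ
  have hexists_ge : ∀ r ∈ risk w ρ '' {M | IsPOVM M}, ∃ θ, v ≤ r θ := by
    rintro _ ⟨M, hM, rfl⟩
    obtain ⟨θ, hθ⟩ := exists_eq_ciSup_of_finite (f := risk w ρ M)
    refine ⟨θ, hθ ▸ ciInf_le ⟨0, ?_⟩ (⟨M, hM⟩ : P)⟩
    rintro _ ⟨M', rfl⟩
    exact (hrisk M' θ).trans (le_ciSup (Set.finite_range _).bddAbove θ)
  obtain ⟨πLF, hπLF, hπLF_bayes⟩ := exists_mem_stdSimplex_le_sum_mul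
    (convex_setOf_isPOVM.is_linear_image (isLinearMap_risk w ρ))
    ⟨_, _, isPOVM_pi_single (Classical.arbitrary U), rfl⟩ hexists_ge
  have hvalue_le_v (π : Θ → ℝ) (hπ : π ∈ stdSimplex ℝ Θ) : ⨅ M : P, bayesRisk w ρ M.1 π ≤ v :=
    le_ciInf fun M => (ciInf_le (hbayes_bdd π hπ) M).trans
      (sum_mul_le_ciSup_of_mem_stdSimplex hπ _)
  have hv_le_value : v ≤ ⨅ M : P, bayesRisk w ρ M.1 πLF :=
    le_ciInf fun M => hπLF_bayes _ ⟨M.1, M.2, rfl⟩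
  refine ⟨πLF, hπLF, fun π hπ => (hvalue_le_v π hπ).trans hv_le_value,
    fun M _ hminimax M' hM' => ?_⟩
  calc bayesRisk w ρ M πLF ≤ ⨆ θ, risk w ρ M θ := sum_mul_le_ciSup_of_mem_stdSimplex hπLF _
    _ ≤ v := le_ciInf fun M'' => hminimax M''.1 M''.2
    _ ≤ ⨅ M : P, bayesRisk w ρ M.1 πLF := hv_le_value
    _ ≤ bayesRisk w ρ M' πLF := ciInf_le (hbayes_bdd πLF hπLF) ⟨M', hM'⟩
end

section
/- Let H be finite-dimensional, Θ, U finite sets, and P₀ a closed convex subset of the set of POVMs with outcome set U. Then the minimax theorem holds relative to P₀: min_{M∈P₀} max_θ R_M(θ) = max_{π∈Δ(Θ)} min_{M∈P₀} Σ_θ R_M(θ)π(θ), and there exist both a minimax POVM in P₀ and a least favorable prior for the restricted problem. -/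
/-!
A closed set of POVMs is compact: `0 ≤ M u ≤ 1` in the Loewner order bounds the operator norm of
each `M u`. The risk is real-linear and continuous in the POVM, so the Bayes risk
`∑ θ, R_M(θ) π(θ)` is convex in `M ∈ P₀` and linear in the prior `π ∈ Δ(Θ)`, and Sion's theorem
gives a saddle point `(M⋆, π⋆)`. Testing the saddle inequality against the vertices of the simplex
identifies `max_π` with `max_θ`, so `M⋆` is a minimax POVM and `π⋆` a least favourable prior.
-/

open Matrix
open scoped ComplexOrder

variable {n : ℕ} {Θ U : Type*}

open Set

section MixedStrategies

variable {E : Type*} [Fintype Θ] {X : Set E} {r : E → Θ → ℝ}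

lemma sum_mul_le_ciSup_of_mem_stdSimplex_s19 (f : Θ → ℝ) {π : Θ → ℝ} (hπ : π ∈ stdSimplex ℝ Θ) :
    ∑ θ, f θ * π θ ≤ ⨆ θ, f θ :=
  calc ∑ θ, f θ * π θ ≤ ∑ θ, (⨆ θ', f θ') * π θ :=
        Finset.sum_le_sum fun θ _ =>
          mul_le_mul_of_nonneg_right (le_ciSup (Finite.bddAbove_range f) θ) (hπ.1 θ)
    _ = ⨆ θ, f θ := by rw [← Finset.mul_sum, hπ.2, mul_one]

lemma concaveOn_sum_mul (c : Θ → ℝ) {Y : Set (Θ → ℝ)} (hY : Convex ℝ Y) :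
    ConcaveOn ℝ Y fun π => ∑ θ, c θ * π θ := by
  have hlin : (fun π => ∑ θ, c θ * π θ) = Fintype.linearCombination ℝ c := by
    ext π
    simp [Fintype.linearCombination_apply, mul_comm]
  exact hlin ▸ (Fintype.linearCombination ℝ c).concaveOn hY

lemma convexOn_sum_mul [AddCommGroup E] [Module ℝ E] (hX : Convex ℝ X)
    (hr : ∀ θ, ConvexOn ℝ X (r · θ)) {π : Θ → ℝ} (hπ : ∀ θ, 0 ≤ π θ) :
    ConvexOn ℝ X fun x => ∑ θ, r x θ * π θ := by
  refine ⟨hX, fun x hx y hy a b ha hb hab => ?_⟩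
  calc ∑ θ, r (a • x + b • y) θ * π θ ≤ ∑ θ, (a • r x θ + b • r y θ) * π θ :=
        Finset.sum_le_sum fun θ _ => mul_le_mul_of_nonneg_right ((hr θ).2 hx hy ha hb hab) (hπ θ)
    _ = a • ∑ θ, r x θ * π θ + b • ∑ θ, r y θ * π θ := by
        simp only [smul_eq_mul, Finset.mul_sum, ← Finset.sum_add_distrib]
        exact Finset.sum_congr rfl fun θ _ => by ring

namespace IsSaddlePointOn

variable {a : E} {b : Θ → ℝ}
  (hs : IsSaddlePointOn X (stdSimplex ℝ Θ) (fun x π => ∑ θ, r x θ * π θ) a b)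
  (ha : a ∈ X) (hb : b ∈ stdSimplex ℝ Θ)
include hs ha hb

lemma ciSup_eq [Nonempty Θ] : ⨆ θ, r a θ = ∑ θ, r a θ * b θ := by
  classical
  refine le_antisymm (ciSup_le fun θ => ?_) (sum_mul_le_ciSup_of_mem_stdSimplex_s19 _ hb)
  simpa [Pi.single_apply] using hs a ha _ (single_mem_stdSimplex ℝ θ)

lemma isMinOn_ciSup [Nonempty Θ] : IsMinOn (fun x => ⨆ θ, r x θ) X a :=
  isMinOn_iff.mpr fun x hx => calc
    ⨆ θ, r a θ = ∑ θ, r a θ * b θ := hs.ciSup_eq ha hb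
    _ ≤ ∑ θ, r x θ * b θ := hs x hx b hb
    _ ≤ ⨆ θ, r x θ := sum_mul_le_ciSup_of_mem_stdSimplex_s19 _ hb

lemma ciInf_eq : ⨅ x : X, ∑ θ, r x θ * b θ = ∑ θ, r a θ * b θ :=
  IsMinOn.iInf_eq (f := fun x => ∑ θ, r x θ * b θ) ha
    (isMinOn_iff.mpr fun x hx => hs x hx b hb)

lemma isMaxOn_ciInf [TopologicalSpace E] (hX : IsCompact X)
    (hcont : ∀ θ, ContinuousOn (r · θ) X) :
    IsMaxOn (fun π => ⨅ x : X, ∑ θ, r x θ * π θ) (stdSimplex ℝ Θ) b := by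
  refine isMaxOn_iff.mpr fun π hπ => ?_
  have hbdd : BddBelow ((fun x => ∑ θ, r x θ * π θ) '' X) :=
    hX.bddBelow_image (continuousOn_finsetSum _ fun θ _ => (hcont θ).mul continuousOn_const)
  rw [image_eq_range] at hbdd
  calc ⨅ x : X, ∑ θ, r x θ * π θ ≤ ∑ θ, r a θ * π θ := ciInf_le hbdd ⟨a, ha⟩
    _ ≤ ∑ θ, r a θ * b θ := hs a ha π hπ
    _ = ⨅ x : X, ∑ θ, r x θ * b θ := (hs.ciInf_eq ha hb).symm

end IsSaddlePointOn

variable [AddCommGroup E] [Module ℝ E] [TopologicalSpace E] [IsTopologicalAddGroup E]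
  [ContinuousSMul ℝ E] [Nonempty Θ]

theorem exists_isSaddlePointOn_stdSimplex (hne : X.Nonempty) (hX : IsCompact X)
    (hcont : ∀ θ, ContinuousOn (r · θ) X) (hconvex : ∀ θ, ConvexOn ℝ X (r · θ)) :
    ∃ a ∈ X, ∃ b ∈ stdSimplex ℝ Θ,
      IsSaddlePointOn X (stdSimplex ℝ Θ) (fun x π => ∑ θ, r x θ * π θ) a b := by
  classical
  have hXconv : Convex ℝ X := (hconvex (Classical.arbitrary Θ)).1
  have hcont_π : ∀ x, Continuous fun π : Θ → ℝ => ∑ θ, r x θ * π θ := fun x => by fun_prop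
  exact Sion.exists_isSaddlePointOn' hne hX
    (fun π _ => (continuousOn_finsetSum _ fun θ _ =>
      (hcont θ).mul continuousOn_const).lowerSemicontinuousOn)
    (fun π hπ => (convexOn_sum_mul hXconv hconvex hπ.1).quasiconvexOn)
    (convex_stdSimplex ℝ Θ) (isCompact_stdSimplex ℝ Θ)
    (fun x _ => (hcont_π x).continuousOn.upperSemicontinuousOn)
    (fun x _ => (concaveOn_sum_mul (r x) (convex_stdSimplex ℝ Θ)).quasiconcaveOn)
    hXconv ⟨_, single_mem_stdSimplex ℝ (Classical.arbitrary Θ)⟩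

theorem minimax_stdSimplex (hne : X.Nonempty) (hX : IsCompact X)
    (hcont : ∀ θ, ContinuousOn (r · θ) X) (hconvex : ∀ θ, ConvexOn ℝ X (r · θ)) :
    (⨅ x : X, ⨆ θ, r x θ) = (⨆ π : stdSimplex ℝ Θ, ⨅ x : X, ∑ θ, r x θ * (π : Θ → ℝ) θ) ∧
    (∃ a ∈ X, ∀ x ∈ X, (⨆ θ, r a θ) ≤ ⨆ θ, r x θ) ∧
    (∃ b ∈ stdSimplex ℝ Θ, ∀ π ∈ stdSimplex ℝ Θ,
      (⨅ x : X, ∑ θ, r x θ * π θ) ≤ ⨅ x : X, ∑ θ, r x θ * b θ) := by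
  obtain ⟨a, ha, b, hb, hs⟩ := exists_isSaddlePointOn_stdSimplex hne hX hcont hconvex
  have hmin := hs.isMinOn_ciSup ha hb
  have hmax := hs.isMaxOn_ciInf ha hb hX hcont
  refine ⟨?_, ⟨a, ha, fun x hx => hmin hx⟩, ⟨b, hb, fun π hπ => hmax hπ⟩⟩
  calc ⨅ x : X, ⨆ θ, r x θ = ∑ θ, r a θ * b θ := (hmin.iInf_eq ha).trans (hs.ciSup_eq ha hb)
    _ = ⨅ x : X, ∑ θ, r x θ * b θ := (hs.ciInf_eq ha hb).symm
    _ = _ := (hmax.iSup_eq hb).symm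

end MixedStrategies

section POVM

open scoped Matrix.Norms.L2Operator MatrixOrder

variable [Fintype U]

lemma IsPOVM.norm_apply_le {M : U → Matrix (Fin n) (Fin n) ℂ} (hM : IsPOVM M) (u : U) :
    ‖M u‖ ≤ ‖(1 : Matrix (Fin n) (Fin n) ℂ)‖ := by
  have hle : M u ≤ 1 :=
    hM.2 ▸ Finset.single_le_sum (fun v _ => (hM.1 v).nonneg) (Finset.mem_univ u)
  exact CStarAlgebra.norm_le_norm_of_nonneg_of_le (hM.1 u).nonneg hle

-- The L2 operator norm induces the product topology on matrices, so its closed balls are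
-- compact for the topology in which `P` is closed.
lemma isCompact_of_forall_isPOVM {P : Set (U → Matrix (Fin n) (Fin n) ℂ)}
    (hP : IsClosed P) (hPOVM : ∀ M ∈ P, IsPOVM M) : IsCompact P :=
  (isCompact_univ_pi fun _ => isCompact_closedBall 0 _).of_isClosed_subset hP
    fun M hM u _ => mem_closedBall_zero_iff.mpr ((hPOVM M hM).norm_apply_le u)

end POVM

section Risk

variable [Fintype U] (w : Θ → U → ℝ) (ρ : Θ → Matrix (Fin n) (Fin n) ℂ) (θ : Θ)

lemma continuous_risk : Continuous fun M : U → Matrix (Fin n) (Fin n) ℂ => risk w ρ M θ := by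
  unfold risk
  fun_prop

noncomputable def riskLinearMap : (U → Matrix (Fin n) (Fin n) ℂ) →ₗ[ℝ] ℝ where
  toFun M := risk w ρ M θ
  map_add' M N := by
    simp only [risk, Pi.add_apply, Matrix.trace_add, Complex.add_re, mul_add,
      Finset.sum_add_distrib]
  map_smul' c M := by
    simp only [risk, Pi.smul_apply, Matrix.mul_smul, Matrix.trace_smul, Complex.real_smul,
      Complex.re_ofReal_mul, RingHom.id_apply, smul_eq_mul, Finset.mul_sum]
    exact Finset.sum_congr rfl fun u _ => by ring

lemma convexOn_risk {s : Set (U → Matrix (Fin n) (Fin n) ℂ)} (hs : Convex ℝ s) :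
    ConvexOn ℝ s fun M => risk w ρ M θ :=
  (riskLinearMap w ρ θ).convexOn hs

end Risk

theorem quantum_minimax_restricted_class_general
    [Fintype Θ] [Nonempty Θ] [Fintype U]
    (ρ : Θ → Matrix (Fin n) (Fin n) ℂ)
    (w : Θ → U → ℝ)
    (P₀ : Set (U → Matrix (Fin n) (Fin n) ℂ))
    (hP₀ne : P₀.Nonempty) (hP₀closed : IsClosed P₀) (hP₀conv : Convex ℝ P₀)
    (hP₀povm : ∀ M ∈ P₀, IsPOVM M) :
    (⨅ M : P₀, ⨆ θ, risk w ρ M.1 θ) =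
      (⨆ π : stdSimplex ℝ Θ, ⨅ M : P₀, ∑ θ, risk w ρ M.1 θ * (π : Θ → ℝ) θ) ∧
    (∃ Mstar ∈ P₀, ∀ M ∈ P₀, (⨆ θ, risk w ρ Mstar θ) ≤ ⨆ θ, risk w ρ M θ) ∧
    (∃ πLF ∈ stdSimplex ℝ Θ, ∀ π ∈ stdSimplex ℝ Θ,
      (⨅ M : P₀, ∑ θ, risk w ρ M.1 θ * π θ) ≤ ⨅ M : P₀, ∑ θ, risk w ρ M.1 θ * πLF θ) :=
  minimax_stdSimplex hP₀ne (isCompact_of_forall_isPOVM hP₀closed hP₀povm)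
    (fun θ => (continuous_risk w ρ θ).continuousOn) (fun θ => convexOn_risk w ρ θ hP₀conv)

/-- the quantum minimax theorem relative to a nonempty closed convex
subclass P₀ of POVMs, together with the existence of a minimax POVM in P₀ and of a
least favorable prior for the restricted problem. -/
theorem quantum_minimax_restricted_class
    [Fintype Θ] [Nonempty Θ] [Fintype U] [Nonempty U]
    (ρ : Θ → Matrix (Fin n) (Fin n) ℂ)
    (hρ : ∀ θ, (ρ θ).PosSemidef ∧ (ρ θ).trace = 1)
    (w : Θ → U → ℝ) (hw : ∀ θ u, 0 ≤ w θ u)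
    (P₀ : Set (U → Matrix (Fin n) (Fin n) ℂ))
    (hP₀ne : P₀.Nonempty) (hP₀closed : IsClosed P₀) (hP₀conv : Convex ℝ P₀)
    (hP₀povm : ∀ M ∈ P₀, IsPOVM M) :
    (⨅ M : P₀, ⨆ θ, risk w ρ M.1 θ) =
      (⨆ π : stdSimplex ℝ Θ, ⨅ M : P₀, ∑ θ, risk w ρ M.1 θ * (π : Θ → ℝ) θ) ∧
    (∃ Mstar ∈ P₀, ∀ M ∈ P₀, (⨆ θ, risk w ρ Mstar θ) ≤ ⨆ θ, risk w ρ M θ) ∧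
    (∃ πLF ∈ stdSimplex ℝ Θ, ∀ π ∈ stdSimplex ℝ Θ,
      (⨅ M : P₀, ∑ θ, risk w ρ M.1 θ * π θ) ≤ ⨅ M : P₀, ∑ θ, risk w ρ M.1 θ * πLF θ) :=
  quantum_minimax_restricted_class_general ρ w P₀ hP₀ne hP₀closed hP₀conv hP₀povm
end
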